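/- Let b be an even function in H^∞ and α ∈ ℂ. Then S*b + α·S*²b = (S*²b)·(z + α) and −conj(α)·S*b + S*²b = (S*²b)·(−conj(α)z + 1), and consequently for all m, n ≥ 0, ⟨S*^{2m}(S*b + α S*²b), S*^{2n}(−conj(α) S*b + S*²b)⟩ = 0 in H². -/

import Mathlib

/-!
Evenness of `b` kills the constant coefficient of `S*b`, so `S*b = z · S*²b`, which gives both
factorizations at once. In the orthogonality, the `k`-th coefficient of
`S*^{2m}(S*b + α S*²b)` is `α c(2m+k+2)` for even `k` and `c(2m+k+1)` for odd `k`, while that of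
`S*^{2n}(−conj α S*b + S*²b)` is `c(2n+k+2)`, respectively `−conj α c(2n+k+1)`; hence the
`(2j+1)`-th term of the inner product is the negative of the `2j`-th one and the sum vanishes.
-/

open ComplexConjugate

theorem summable_mul_of_summable_norm_sq {ι R : Type*} [NormedRing R] [CompleteSpace R]
    {f g : ι → R} (hf : Summable fun i => ‖f i‖ ^ 2) (hg : Summable fun i => ‖g i‖ ^ 2) :
    Summable fun i => f i * g i := by
  refine Summable.of_norm <| Summable.of_nonneg_of_le (fun i => norm_nonneg _) (fun i => ?_)
    ((hf.add hg).div_const 2)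
  calc ‖f i * g i‖ ≤ ‖f i‖ * ‖g i‖ := norm_mul_le _ _
    _ ≤ (‖f i‖ ^ 2 + ‖g i‖ ^ 2) / 2 := by nlinarith [sq_nonneg (‖f i‖ - ‖g i‖)]

theorem summable_mul_pow_of_summable_norm_sq {c : ℕ → ℂ} (hc : Summable fun k => ‖c k‖ ^ 2)
    {z : ℂ} (hz : ‖z‖ < 1) : Summable fun k => c k * z ^ k := by
  refine summable_mul_of_summable_norm_sq hc ?_
  have hz2 : ‖z‖ ^ 2 < 1 := by nlinarith [norm_nonneg z]
  exact (summable_geometric_of_lt_one (by positivity) hz2).congr fun k => by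
    rw [norm_pow]; ring

theorem tsum_mul_pow_eq_add_mul_tsum {a : ℕ → ℂ} {z : ℂ} (ha : Summable fun k => a k * z ^ k) :
    ∑' k, a k * z ^ k = a 0 + z * ∑' k, a (k + 1) * z ^ k := by
  rw [ha.tsum_eq_zero_add, ← tsum_mul_left]
  congr 1
  · ring
  · exact tsum_congr fun k => by ring

theorem tsum_backwardShift_combination {c : ℕ → ℂ} (hc : Summable fun k => ‖c k‖ ^ 2)
    (hc1 : c 1 = 0) (β γ : ℂ) {z : ℂ} (hz : ‖z‖ < 1) :
    ∑' k, (β * c (k + 1) + γ * c (k + 2)) * z ^ k =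
      (∑' k, c (k + 2) * z ^ k) * (β * z + γ) := by
  have hshift (s : ℕ) : Summable fun k => c (k + s) * z ^ k :=
    summable_mul_pow_of_summable_norm_sq ((summable_nat_add_iff s).2 hc) hz
  have hS : ∑' k, c (k + 1) * z ^ k = z * ∑' k, c (k + 2) * z ^ k := by
    simpa [hc1] using tsum_mul_pow_eq_add_mul_tsum (hshift 1)
  calc ∑' k, (β * c (k + 1) + γ * c (k + 2)) * z ^ k
      = β * ∑' k, c (k + 1) * z ^ k + γ * ∑' k, c (k + 2) * z ^ k := by
        rw [← tsum_mul_left, ← tsum_mul_left,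
          ← ((hshift 1).mul_left β).tsum_add ((hshift 2).mul_left γ)]
        exact tsum_congr fun k => by ring
    _ = (∑' k, c (k + 2) * z ^ k) * (β * z + γ) := by rw [hS]; ring

theorem tsum_eq_zero_of_odd_eq_neg_even {E : Type*} [AddCommGroup E] [TopologicalSpace E]
    [IsTopologicalAddGroup E] [T2Space E] {f : ℕ → E} (hf : Summable fun j => f (2 * j))
    (hodd : ∀ j, f (2 * j + 1) = -f (2 * j)) : ∑' k, f k = 0 := by
  have hf' : Summable fun j => f (2 * j + 1) := by simpa only [hodd] using hf.neg
  rw [← tsum_even_add_odd hf hf']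
  simp only [hodd, tsum_neg, add_neg_cancel]

theorem tsum_backwardShift_orthogonal {c : ℕ → ℂ} (hsum : Summable fun k => ‖c k‖ ^ 2)
    (heven : ∀ k, Odd k → c k = 0) (α : ℂ) (m n : ℕ) :
    ∑' k, (c (2 * m + k + 1) + α * c (2 * m + k + 2)) *
      conj (-conj α * c (2 * n + k + 1) + c (2 * n + k + 2)) = 0 := by
  have hodd (i j : ℕ) : c (2 * i + 2 * j + 1) = 0 := heven _ ⟨i + j, by ring⟩
  have hsub (i : ℕ) : Summable fun j => ‖c (2 * i + 2 * j + 2)‖ ^ 2 :=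
    hsum.comp_injective (i := fun j => 2 * i + 2 * j + 2) fun a b h => by simp only at h; omega
  set g : ℕ → ℂ := fun j => c (2 * m + 2 * j + 2) * conj (c (2 * n + 2 * j + 2))
  have hg : Summable g := summable_mul_of_summable_norm_sq (hsub m)
    (by simpa only [RCLike.norm_conj] using hsub n)
  have heven_term (j : ℕ) : (c (2 * m + 2 * j + 1) + α * c (2 * m + 2 * j + 2)) *
      conj (-conj α * c (2 * n + 2 * j + 1) + c (2 * n + 2 * j + 2)) = α * g j := by
    simp only [g, hodd, mul_zero, zero_add, mul_assoc]
  have hodd_term (j : ℕ) : (c (2 * m + (2 * j + 1) + 1) + α * c (2 * m + (2 * j + 1) + 2)) *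
      conj (-conj α * c (2 * n + (2 * j + 1) + 1) + c (2 * n + (2 * j + 1) + 2)) = -(α * g j) := by
    have e (i : ℕ) : 2 * i + (2 * j + 1) + 1 = 2 * i + 2 * j + 2 := by ring
    have e' (i : ℕ) : 2 * i + (2 * j + 1) + 2 = 2 * (i + j + 1) + 1 := by ring
    simp only [g, e, e', heven _ (odd_two_mul_add_one _), mul_zero, add_zero, map_mul, map_neg,
      Complex.conj_conj]
    ring
  refine tsum_eq_zero_of_odd_eq_neg_even ?_ fun j => ?_
  · simpa only [heven_term] using hg.mul_left α
  · rw [heven_term, hodd_term]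

theorem stmt14_general (c : ℕ → ℂ) (hsum : Summable fun k => ‖c k‖ ^ 2)
    (heven : ∀ k, Odd k → c k = 0) (α : ℂ) :
    (∀ z : ℂ, ‖z‖ < 1 →
      ∑' k : ℕ, (c (k + 1) + α * c (k + 2)) * z ^ k =
        (∑' k : ℕ, c (k + 2) * z ^ k) * (z + α)) ∧
    (∀ z : ℂ, ‖z‖ < 1 →
      ∑' k : ℕ, (-conj α * c (k + 1) + c (k + 2)) * z ^ k =
        (∑' k : ℕ, c (k + 2) * z ^ k) * (-conj α * z + 1)) ∧
    (∀ m n : ℕ,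
      ∑' k : ℕ, (c (2 * m + k + 1) + α * c (2 * m + k + 2)) *
        conj (-conj α * c (2 * n + k + 1) + c (2 * n + k + 2)) = 0) := by
  have hc1 : c 1 = 0 := heven 1 odd_one
  refine ⟨fun z hz => ?_, fun z hz => ?_, tsum_backwardShift_orthogonal hsum heven α⟩
  · simpa using tsum_backwardShift_combination hsum hc1 1 α hz
  · simpa using tsum_backwardShift_combination hsum hc1 (-conj α) 1 hz

/-- for an even `b ∈ H^∞` with Taylor coefficients `c` (all odd
coefficients vanish) and `α ∈ ℂ`, one has the factorizations
`S*b + α S*²b = (S*²b)(z + α)` and `−conj α · S*b + S*²b = (S*²b)(−conj α · z + 1)`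
on the unit disk, and consequently the `H²`-orthogonality
`⟨S*^{2m}(S*b + α S*²b), S*^{2n}(−conj α S*b + S*²b)⟩ = 0` for all `m, n ≥ 0`
(inner products computed as sums over Taylor coefficients). -/
theorem stmt14 (c : ℕ → ℂ) (hinfty : ∃ C : ℝ, ∀ z : ℂ, ‖z‖ < 1 → ‖∑' k : ℕ, c k * z ^ k‖ ≤ C)
    (hsum : Summable fun k => ‖c k‖ ^ 2)
    (heven : ∀ k, Odd k → c k = 0) (α : ℂ) :
    (∀ z : ℂ, ‖z‖ < 1 →
      ∑' k : ℕ, (c (k + 1) + α * c (k + 2)) * z ^ k =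
        (∑' k : ℕ, c (k + 2) * z ^ k) * (z + α)) ∧
    (∀ z : ℂ, ‖z‖ < 1 →
      ∑' k : ℕ, (-conj α * c (k + 1) + c (k + 2)) * z ^ k =
        (∑' k : ℕ, c (k + 2) * z ^ k) * (-conj α * z + 1)) ∧
    (∀ m n : ℕ,
      ∑' k : ℕ, (c (2 * m + k + 1) + α * c (2 * m + k + 2)) *
        conj (-conj α * c (2 * n + k + 1) + c (2 * n + k + 2)) = 0) :=
  stmt14_general c hsum heven α
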